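/- arXiv:1612.02518 — 8 statements merged into one kernel-verified Lean document; each statement's English description precedes it below -/
import Mathlib

section
/- For all matrices A, B, C, D in SL(2,ℂ), one has 2·tr(ABCD) = tr(A)·tr(B)·tr(C)·tr(D) + tr(A)·tr(BCD) + tr(B)·tr(CDA) + tr(C)·tr(DAB) + tr(D)·tr(ABC) + tr(AB)·tr(CD) + tr(DA)·tr(BC) − tr(AC)·tr(BD) − tr(A)·tr(B)·tr(CD) − tr(AB)·tr(C)·tr(D) − tr(D)·tr(A)·tr(BC) − tr(DA)·tr(B)·tr(C). -/
/-! For `2 × 2` matrices, polarizing Cayley–Hamilton gives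
`XY + YX = tr X • Y + tr Y • X + (tr (XY) - tr X tr Y) • 1`. Multiplying on the left by `Z` and
taking traces, `tr (ZXY) + tr (ZYX)` becomes a combination of traces of shorter products, for any
blocks `X`, `Y`. The cyclic words `ABCD`, `ACDB`, `ADBC` are pairwise related by one such block
swap; since this cycle is odd, the alternating sum of the three relations isolates `2 tr (ABCD)`.
One more swap, `tr (DAB) + tr (DBA)`, puts the result in Vogt's form. -/

open Matrix

namespace Matrix

variable {R : Type*} [CommRing R]

theorem mul_add_mul_swap_fin_two (X Y : Matrix (Fin 2) (Fin 2) R) :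
    X * Y + Y * X = X.trace • Y + Y.trace • X + ((X * Y).trace - X.trace * Y.trace) • 1 := by
  ext i j
  simp only [Matrix.add_apply, Matrix.smul_apply, smul_eq_mul, mul_apply, Fin.sum_univ_two,
    trace_fin_two, one_apply]
  fin_cases i <;> fin_cases j <;>
    simp only [Fin.zero_eta, Fin.mk_one, Fin.isValue, zero_ne_one, one_ne_zero, ↓reduceIte] <;> ring

theorem trace_mul_mul_add_trace_mul_mul_swap_fin_two (Z X Y : Matrix (Fin 2) (Fin 2) R) :
    (Z * X * Y).trace + (Z * Y * X).trace =
      X.trace * (Z * Y).trace + Y.trace * (Z * X).trace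
        + ((X * Y).trace - X.trace * Y.trace) * Z.trace := by
  have h := congrArg (fun M => (Z * M).trace) (mul_add_mul_swap_fin_two X Y)
  simpa only [mul_assoc, mul_comm, mul_add, trace_add, Algebra.mul_smul_comm, mul_one, trace_smul,
    smul_eq_mul] using h

end Matrix

theorem trace_identity_four_general (A B C D : Matrix (Fin 2) (Fin 2) ℂ) :
    2 * (A * B * C * D).trace =
      A.trace * B.trace * C.trace * D.trace
        + A.trace * (B * C * D).trace + B.trace * (C * D * A).trace
        + C.trace * (D * A * B).trace + D.trace * (A * B * C).trace
        + (A * B).trace * (C * D).trace + (D * A).trace * (B * C).trace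
        - (A * C).trace * (B * D).trace
        - A.trace * B.trace * (C * D).trace - (A * B).trace * C.trace * D.trace
        - D.trace * A.trace * (B * C).trace - (D * A).trace * B.trace * C.trace := by
  have hB_CD := trace_mul_mul_add_trace_mul_mul_swap_fin_two A B (C * D)
  have hBC_D := trace_mul_mul_add_trace_mul_mul_swap_fin_two A (B * C) D
  have hC_DB := trace_mul_mul_add_trace_mul_mul_swap_fin_two A C (D * B)
  have hA_B := trace_mul_mul_add_trace_mul_mul_swap_fin_two D A B
  simp only [← mul_assoc] at hB_CD hBC_D hC_DB
  rw [← trace_mul_cycle C D A] at hB_CD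
  rw [trace_mul_comm A D] at hBC_D
  rw [trace_mul_cycle C D B, trace_mul_comm D B] at hC_DB
  rw [trace_mul_cycle D B A, trace_mul_comm D B] at hA_B
  linear_combination hB_CD + hBC_D - hC_DB - C.trace * hA_B

/-- Vogt's four-variable trace identity for `A, B, C, D ∈ SL(2,ℂ)`. -/
theorem trace_identity_four (A B C D : Matrix (Fin 2) (Fin 2) ℂ)
    (hA : A.det = 1) (hB : B.det = 1) (hC : C.det = 1) (hD : D.det = 1) :
    2 * (A * B * C * D).trace =
      A.trace * B.trace * C.trace * D.trace
        + A.trace * (B * C * D).trace + B.trace * (C * D * A).trace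
        + C.trace * (D * A * B).trace + D.trace * (A * B * C).trace
        + (A * B).trace * (C * D).trace + (D * A).trace * (B * C).trace
        - (A * C).trace * (B * D).trace
        - A.trace * B.trace * (C * D).trace - (A * B).trace * C.trace * D.trace
        - D.trace * A.trace * (B * C).trace - (D * A).trace * B.trace * C.trace :=
  trace_identity_four_general A B C D
end

section
/- The map from pairs of 2×2 complex matrices to ℂ⁵ sending (A, B) to (tr(A), tr(B), tr(AB), det(A), det(B)) is surjective: for every (t₁, t₂, t₃, d₁, d₂) ∈ ℂ⁵ there exist 2×2 complex matrices A and B with tr(A) = t₁, tr(B) = t₂, tr(AB) = t₃, det(A) = d₁, and det(B) = d₂. -/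
open Matrix

open Polynomial in
theorem IsAlgClosed.exists_add_eq_and_mul_eq {K : Type*} [Field K] [IsAlgClosed K] (s p : K) :
    ∃ x y : K, x + y = s ∧ x * y = p := by
  obtain ⟨x, hx⟩ := IsAlgClosed.exists_root (C 1 * X ^ 2 + C (-s) * X + C p)
    (by rw [degree_quadratic one_ne_zero]; decide)
  obtain ⟨y, -, hsum, hprod⟩ := vieta_formula_quadratic (b := s) (c := p) (x := x)
    (by simpa [sq, sub_eq_add_neg] using hx)
  exact ⟨x, y, hsum, hprod⟩

/-- Given the eigenvalues `α, β` of `A` and `γ, δ` of `B`, take `A` upper and `B` lower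
triangular: the off-diagonal entry of `B` then enters `tr (AB)` linearly and fixes it freely. -/
theorem Matrix.exists_trace_det_fin_two_of_eigenvalues {R : Type*} [CommRing R]
    (α β γ δ t : R) :
    ∃ A B : Matrix (Fin 2) (Fin 2) R, A.trace = α + β ∧ B.trace = γ + δ ∧ (A * B).trace = t ∧
      A.det = α * β ∧ B.det = γ * δ := by
  refine ⟨!![α, 1; 0, β], !![γ, 0; t - α * γ - β * δ, δ], ?_, ?_, ?_, ?_, ?_⟩ <;>
    simp [trace_fin_two, det_fin_two]
  ring

/-- The map `(A, B) ↦ (tr A, tr B, tr (AB), det A, det B)` from pairs of 2×2 complex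
matrices to `ℂ⁵` is surjective. -/
theorem trace_det_invariants_surjective (t₁ t₂ t₃ d₁ d₂ : ℂ) :
    ∃ A B : Matrix (Fin 2) (Fin 2) ℂ,
      A.trace = t₁ ∧ B.trace = t₂ ∧ (A * B).trace = t₃ ∧ A.det = d₁ ∧ B.det = d₂ := by
  obtain ⟨α, β, rfl, rfl⟩ := IsAlgClosed.exists_add_eq_and_mul_eq t₁ d₁
  obtain ⟨γ, δ, rfl, rfl⟩ := IsAlgClosed.exists_add_eq_and_mul_eq t₂ d₂
  exact exists_trace_det_fin_two_of_eigenvalues α β γ δ t₃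
end

section
/- Let B ∈ SL(2,ℂ) be a nonscalar matrix (i.e., B ≠ I and B ≠ −I) and let k ∈ ℂ. If it is not the case that both tr(B) ∈ {2, −2} and k ∈ {2, −2}, then the set { A ∈ SL(2,ℂ) : AB = BA and tr(AB) = k } is finite. -/
/-!
For `2 × 2` matrices the entries of `A * B - B * A` are the components of the cross product of
the vectors `(A₀₀ - A₁₁, A₀₁, A₁₀)` and `(B₀₀ - B₁₁, B₀₁, B₁₀)`, the second of which vanishes
only for scalar `B`. Hence the centralizer of a nonscalar `B` is `{a • 1 + b • B}`.

If `A` commutes with `B`, so does `C = A * B`, and `A` is recovered from `C`. Writing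
`C = a • 1 + b • B`, the identity `4 det C = (tr C)² + b² (4 det B - (tr B)²)` together with
`det C = 1`, `tr C = k` leaves at most two values of `b`, each determining `a`, unless
`(tr B)² = 4 = k²`.
-/

open Matrix

theorem finite_setOf_pow_eq {R : Type*} [CommRing R] [IsDomain R] {n : ℕ} (hn : 0 < n) (a : R) :
    {x : R | x ^ n = a}.Finite := by
  classical
  exact (Polynomial.nthRoots n a).toFinset.finite_toSet.subset fun x hx => by
    simpa [Polynomial.mem_nthRoots hn] using hx

namespace Matrix

section CommRing

variable {R : Type*} [CommRing R]

def nonscalarCoords (M : Matrix (Fin 2) (Fin 2) R) : Fin 3 → R :=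
  ![M 0 0 - M 1 1, M 0 1, M 1 0]

theorem cross_nonscalarCoords (A B : Matrix (Fin 2) (Fin 2) R) :
    nonscalarCoords A ⨯₃ nonscalarCoords B =
      ![(A * B - B * A) 0 0, (A * B - B * A) 1 0, (A * B - B * A) 0 1] := by
  ext i
  fin_cases i <;> simp [nonscalarCoords, cross_apply, mul_apply, Fin.sum_univ_two] <;> ring

theorem eq_smul_one_add_smul_of_nonscalarCoords_eq {A B : Matrix (Fin 2) (Fin 2) R} {b : R}
    (h : nonscalarCoords A = b • nonscalarCoords B) :
    A = (A 1 1 - b * B 1 1) • (1 : Matrix (Fin 2) (Fin 2) R) + b • B := by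
  obtain ⟨h₀, h₁, h₂⟩ :
      A 0 0 - A 1 1 = b * (B 0 0 - B 1 1) ∧ A 0 1 = b * B 0 1 ∧ A 1 0 = b * B 1 0 := by
    simpa [nonscalarCoords, funext_iff, Fin.forall_fin_succ] using h
  ext i j
  fin_cases i <;> fin_cases j <;> simp [h₁, h₂]
  linear_combination h₀

theorem four_mul_det_smul_one_add_smul (B : Matrix (Fin 2) (Fin 2) R) (a b : R) :
    4 * (a • 1 + b • B).det = (a • 1 + b • B).trace ^ 2 + b ^ 2 * (4 * B.det - B.trace ^ 2) := by
  simp [det_fin_two, trace_fin_two]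
  ring

end CommRing

section Field

variable {K : Type*} [Field K]

theorem nonscalarCoords_ne_zero {B : Matrix (Fin 2) (Fin 2) K} (hB : B.det = 1) (hB1 : B ≠ 1)
    (hB2 : B ≠ -1) : nonscalarCoords B ≠ 0 := by
  intro h
  have hscalar : B = B 1 1 • (1 : Matrix (Fin 2) (Fin 2) K) := by
    simpa using eq_smul_one_add_smul_of_nonscalarCoords_eq (B := B) (b := 0) (by simp [h])
  have hsq : B 1 1 ^ 2 = 1 ^ 2 := by
    have := congrArg det hscalar
    rw [det_smul, det_one, hB] at this
    simpa [eq_comm] using this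
  rcases sq_eq_sq_iff_eq_or_eq_neg.mp hsq with h1 | h1
  · exact hB1 (by simpa [h1] using hscalar)
  · exact hB2 (by simpa [h1] using hscalar)

theorem exists_eq_smul_one_add_smul_of_commute {A B : Matrix (Fin 2) (Fin 2) K}
    (hB : nonscalarCoords B ≠ 0) (hAB : Commute A B) : ∃ a b : K, A = a • 1 + b • B := by
  have hcross : nonscalarCoords B ⨯₃ nonscalarCoords A = 0 := by
    simp [cross_nonscalarCoords, hAB.symm.eq]
  obtain ⟨b, hb⟩ : ∃ b : K, b • nonscalarCoords B = nonscalarCoords A := by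
    simpa [LinearIndependent.pair_iff' hB] using
      mt crossProduct_ne_zero_iff_linearIndependent.mpr (not_not.mpr hcross)
  exact ⟨_, _, eq_smul_one_add_smul_of_nonscalarCoords_eq hb.symm⟩

theorem finite_setOf_commute_det_eq_one_trace_eq [NeZero (2 : K)] {B : Matrix (Fin 2) (Fin 2) K}
    (hB : nonscalarCoords B ≠ 0) {k : K} (h : 4 * B.det - B.trace ^ 2 ≠ 0 ∨ k ^ 2 ≠ 4) :
    {C : Matrix (Fin 2) (Fin 2) K | Commute C B ∧ C.det = 1 ∧ C.trace = k}.Finite := by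
  set d := 4 * B.det - B.trace ^ 2
  have hroots : {b : K | b ^ 2 * d = 4 - k ^ 2}.Finite := by
    by_cases hd : d = 0
    · refine Set.finite_empty.subset fun b (hb : b ^ 2 * d = 4 - k ^ 2) => ?_
      exact h.resolve_left (not_not.mpr hd) (by linear_combination hb - b ^ 2 * hd)
    · simpa only [← eq_div_iff hd] using finite_setOf_pow_eq two_pos ((4 - k ^ 2) / d)
  refine (hroots.image fun b => ((k - b * B.trace) / 2) • (1 : Matrix _ _ K) + b • B).subset ?_
  rintro C ⟨hCB, hdet, htr⟩
  obtain ⟨a, b, rfl⟩ := exists_eq_smul_one_add_smul_of_commute hB hCB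
  have ha : a = (k - b * B.trace) / 2 := by
    rw [← htr, eq_div_iff two_ne_zero]
    simp [trace_fin_two]
  refine ⟨b, ?_, by rw [ha]⟩
  show b ^ 2 * d = 4 - k ^ 2
  linear_combination (four_mul_det_smul_one_add_smul B a b).symm + 4 * hdet -
    (k + (a • 1 + b • B).trace) * htr

end Field
end Matrix

/-- Let `B ∈ SL(2,ℂ)` be nonscalar (`B ≠ ±I`) and `k ∈ ℂ`.  If it is not the case that
both `tr B ∈ {2, −2}` and `k ∈ {2, −2}`, then the set of `A ∈ SL(2,ℂ)` commuting with `B`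
and satisfying `tr(AB) = k` is finite. -/
theorem finite_commuting_with_trace (B : Matrix (Fin 2) (Fin 2) ℂ) (hB : B.det = 1)
    (hB1 : B ≠ 1) (hB2 : B ≠ -1) (k : ℂ)
    (h : ¬((B.trace = 2 ∨ B.trace = -2) ∧ (k = 2 ∨ k = -2))) :
    {A : Matrix (Fin 2) (Fin 2) ℂ | A.det = 1 ∧ A * B = B * A ∧ (A * B).trace = k}.Finite := by
  have hunit : IsUnit B.det := by simp [hB]
  have hdisc : 4 * B.det - B.trace ^ 2 ≠ 0 ∨ k ^ 2 ≠ 4 := by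
    rw [hB, mul_one, sub_ne_zero, ne_comm, ← not_and_or, show (4 : ℂ) = 2 ^ 2 by norm_num,
      sq_eq_sq_iff_eq_or_eq_neg, sq_eq_sq_iff_eq_or_eq_neg]
    exact h
  refine ((finite_setOf_commute_det_eq_one_trace_eq (nonscalarCoords_ne_zero hB hB1 hB2)
    hdisc).image (· * B⁻¹)).subset fun A ⟨hdet, hAB, htr⟩ => ⟨A * B, ⟨?_, ?_, htr⟩, ?_⟩
  · simp [Commute, SemiconjBy, mul_assoc, hAB]
  · simp [hdet, hB]
  · exact mul_nonsing_inv_cancel_right B A hunit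
end

section
/- Let k₁, k₂ ∈ ℂ. For every B ∈ SL(2,ℂ) with B ≠ I and B ≠ −I, there exist A₁, A₂ ∈ SL(2,ℂ) with tr(A₁) = k₁, tr(A₂) = k₂, and A₁·A₂ = B. -/
/-!
Any `A₁` with `det A₁ = 1` and `tr A₁ = k₁` gives the factorisation `B = A₁ * (adj A₁ * B)`, so it
suffices to make `tr (adj A₁ * B)`, which is linear in the entries of `A₁`, equal to `k₂` on the
conic `det A₁ = 1`, `tr A₁ = k₁`. If `B₁₀ ≠ 0`, take `A₁` upper triangular with diagonal entries
the roots of `x² - k₁x + 1` and solve for the free corner entry; `B₀₁ ≠ 0` is the transposed case.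
Otherwise `B` is diagonal, and since `B ≠ ±I` has determinant `1` its diagonal entries differ, so
moving the diagonal of `A₁` along `tr A₁ = k₁` changes `tr (adj A₁ * B)` linearly.
-/

open Matrix Polynomial

namespace Matrix

variable {n R : Type*} [Fintype n] [DecidableEq n] [CommRing R]

theorem exists_mul_eq_of_trace_adjugate_mul {k₁ k₂ : R} {A B : Matrix n n R}
    (hA : A.det = 1) (hB : B.det = 1) (hA₁ : A.trace = k₁) (hA₂ : (adjugate A * B).trace = k₂) :
    ∃ A₁ A₂ : Matrix n n R,
      A₁.det = 1 ∧ A₂.det = 1 ∧ A₁.trace = k₁ ∧ A₂.trace = k₂ ∧ A₁ * A₂ = B := by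
  refine ⟨A, adjugate A * B, hA, ?_, hA₁, hA₂, ?_⟩
  · rw [det_mul, det_adjugate, hA, hB, one_pow, one_mul]
  · rw [← mul_assoc, mul_adjugate, hA, one_smul, one_mul]

theorem trace_adjugate_transpose_mul_transpose (A B : Matrix n n R) :
    (adjugate Aᵀ * Bᵀ).trace = (adjugate A * B).trace := by
  rw [← adjugate_transpose, ← transpose_mul, trace_transpose, trace_mul_comm]

theorem trace_adjugate_mul_fin_two_of (a b c d : R) (B : Matrix (Fin 2) (Fin 2) R) :
    (adjugate !![a, b; c, d] * B).trace = d * B 0 0 - b * B 1 0 - c * B 0 1 + a * B 1 1 := by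
  rw [adjugate_fin_two_of, trace_fin_two]
  simp [mul_apply, Fin.sum_univ_two]
  ring

theorem ne_smul_one_of_det_eq_one [NoZeroDivisors R] {B : Matrix (Fin 2) (Fin 2) R}
    (hB : B.det = 1) (hB1 : B ≠ 1) (hB2 : B ≠ -1) (c : R) : B ≠ c • 1 := by
  rintro rfl
  rw [det_smul, det_one, Fintype.card_fin, mul_one, sq, mul_self_eq_one_iff] at hB
  rcases hB with rfl | rfl
  · exact hB1 (one_smul R 1)
  · exact hB2 (neg_one_smul R 1)

end Matrix

theorem IsAlgClosed.exists_mul_sub_eq_one {K : Type*} [Field K] [IsAlgClosed K] (k : K) :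
    ∃ μ : K, μ * (k - μ) = 1 := by
  obtain ⟨μ, hμ⟩ := IsAlgClosed.exists_root (C 1 * X ^ 2 + C (-k) * X + C 1)
    (by rw [degree_quadratic one_ne_zero]; decide)
  refine ⟨μ, ?_⟩
  simp only [IsRoot, eval_add, eval_mul, eval_C, eval_pow, eval_X] at hμ
  linear_combination -hμ

namespace Matrix

variable {K : Type*} [Field K] {k₁ k₂ : K} {B : Matrix (Fin 2) (Fin 2) K}

theorem exists_trace_adjugate_mul_of_apply_one_zero_ne_zero [IsAlgClosed K] (h10 : B 1 0 ≠ 0) :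
    ∃ A : Matrix (Fin 2) (Fin 2) K,
      A.det = 1 ∧ A.trace = k₁ ∧ (adjugate A * B).trace = k₂ := by
  obtain ⟨μ, hμ⟩ := IsAlgClosed.exists_mul_sub_eq_one k₁
  obtain ⟨b, hb⟩ : ∃ b, b * B 1 0 = (k₁ - μ) * B 0 0 + μ * B 1 1 - k₂ :=
    ⟨_, div_mul_cancel₀ _ h10⟩
  refine ⟨!![μ, b; 0, k₁ - μ], ?_, ?_, ?_⟩
  · simpa [det_fin_two_of] using hμ
  · simp [trace_fin_two_of]
  · rw [trace_adjugate_mul_fin_two_of]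
    linear_combination -hb

theorem exists_trace_adjugate_mul_of_apply_zero_one_ne_zero [IsAlgClosed K] (h01 : B 0 1 ≠ 0) :
    ∃ A : Matrix (Fin 2) (Fin 2) K,
      A.det = 1 ∧ A.trace = k₁ ∧ (adjugate A * B).trace = k₂ := by
  obtain ⟨A, hA, hA₁, hA₂⟩ :=
    exists_trace_adjugate_mul_of_apply_one_zero_ne_zero (k₁ := k₁) (k₂ := k₂) (B := Bᵀ) h01
  refine ⟨Aᵀ, by rwa [det_transpose], by rwa [trace_transpose], ?_⟩
  rwa [← trace_adjugate_transpose_mul_transpose, transpose_transpose]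

theorem exists_trace_adjugate_mul_of_apply_one_zero_eq_zero (h10 : B 1 0 = 0)
    (hdiag : B 0 0 ≠ B 1 1) :
    ∃ A : Matrix (Fin 2) (Fin 2) K,
      A.det = 1 ∧ A.trace = k₁ ∧ (adjugate A * B).trace = k₂ := by
  obtain ⟨a, ha⟩ : ∃ a, a * (B 1 1 - B 0 0) = k₂ - k₁ * B 0 0 + B 0 1 :=
    ⟨_, div_mul_cancel₀ _ (sub_ne_zero.mpr hdiag.symm)⟩
  refine ⟨!![a, a * (k₁ - a) - 1; 1, k₁ - a], ?_, ?_, ?_⟩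
  · simp [det_fin_two_of]
  · simp [trace_fin_two_of]
  · rw [trace_adjugate_mul_fin_two_of, h10]
    linear_combination ha

theorem exists_trace_adjugate_mul_of_ne_smul_one [IsAlgClosed K] (hB : ∀ c : K, B ≠ c • 1) :
    ∃ A : Matrix (Fin 2) (Fin 2) K,
      A.det = 1 ∧ A.trace = k₁ ∧ (adjugate A * B).trace = k₂ := by
  by_cases h10 : B 1 0 = 0
  · by_cases h01 : B 0 1 = 0
    · refine exists_trace_adjugate_mul_of_apply_one_zero_eq_zero h10 fun hdiag ↦ hB (B 0 0) ?_
      ext i j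
      fin_cases i <;> fin_cases j <;> simp [h10, h01, hdiag]
    · exact exists_trace_adjugate_mul_of_apply_zero_one_ne_zero h01
  · exact exists_trace_adjugate_mul_of_apply_one_zero_ne_zero h10

end Matrix

/-- For any `k₁, k₂ ∈ ℂ` and any `B ∈ SL(2,ℂ)` with `B ≠ ±I`, there are
`A₁, A₂ ∈ SL(2,ℂ)` with `tr A₁ = k₁`, `tr A₂ = k₂` and `A₁A₂ = B`. -/
theorem product_two_with_traces (k₁ k₂ : ℂ) (B : Matrix (Fin 2) (Fin 2) ℂ)
    (hB : B.det = 1) (hB1 : B ≠ 1) (hB2 : B ≠ -1) :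
    ∃ A₁ A₂ : Matrix (Fin 2) (Fin 2) ℂ,
      A₁.det = 1 ∧ A₂.det = 1 ∧ A₁.trace = k₁ ∧ A₂.trace = k₂ ∧ A₁ * A₂ = B := by
  obtain ⟨A, hA, hA₁, hA₂⟩ :=
    exists_trace_adjugate_mul_of_ne_smul_one (k₁ := k₁) (k₂ := k₂)
      (ne_smul_one_of_det_eq_one hB hB1 hB2)
  exact exists_mul_eq_of_trace_adjugate_mul hA hB hA₁ hA₂
end

section
/- Every element of SL(2,ℂ) is a commutator: for every B ∈ SL(2,ℂ) there exist A₁, A₂ ∈ SL(2,ℂ) such that A₁·A₂·A₁⁻¹·A₂⁻¹ = B. -/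
/-!
A non-central `B ∈ SL(2,ℂ)` has a cyclic vector `v`, so in the basis `v, Bv` it becomes the
companion matrix of `X² - (tr B) X + 1`; rescaling the change of basis by a square root of its
determinant makes it lie in `SL(2,ℂ)`. Hence non-central elements of `SL(2,ℂ)` with the same trace
are conjugate. Conjugating by `diag(i, -i)` multiplies the off-diagonal entries of `X` by `-1`, so
`⁅diag(i, -i), X⁆` has both diagonal entries equal to `x w + y z`, and a suitable `X` gives a
non-central commutator of any prescribed trace. The central elements `±1` are commutators by
inspection, and commutators are stable under conjugation.
-/

open Matrix Subgroup
open scoped commutatorElement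

theorem IsConj.mem_commutatorSet {G : Type*} [Group G] {g h : G} (hgh : IsConj g h)
    (hg : g ∈ commutatorSet G) : h ∈ commutatorSet G := by
  obtain ⟨c, rfl⟩ := isConj_iff.mp hgh
  obtain ⟨a, b, rfl⟩ := hg
  rw [conjugate_commutatorElement]
  exact commutator_mem_commutatorSet _ _

namespace Matrix

section CommRing

variable {R : Type*} [CommRing R]

def krylov (A : Matrix (Fin 2) (Fin 2) R) (v : Fin 2 → R) : Matrix (Fin 2) (Fin 2) R :=
  (of ![v, A *ᵥ v])ᵀ

theorem mul_krylov (A : Matrix (Fin 2) (Fin 2) R) (v : Fin 2 → R) :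
    A * krylov A v = krylov A v * !![0, -A.det; 1, A.trace] := by
  ext i j
  fin_cases i <;> fin_cases j <;>
    simp [krylov, mul_apply, Fin.sum_univ_two, det_fin_two, trace_fin_two] <;> ring

end CommRing

section Field

variable {K : Type*} [Field K] {A B : Matrix (Fin 2) (Fin 2) K}

theorem exists_isUnit_krylov (hA : A ∉ Set.range (scalar (Fin 2))) :
    ∃ v, IsUnit (krylov A v) := by
  by_contra! h
  obtain ⟨a, ha⟩ := (toLin' A).exists_eq_smul_id_of_forall_notLinearIndependent fun v hv ↦
    h v (linearIndependent_cols_iff_isUnit.mp hv)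
  exact hA ⟨a, by simpa [smul_one_eq_diagonal] using congrArg LinearMap.toMatrix' ha.symm⟩

theorem isConj_companion (hA : A ∉ Set.range (scalar (Fin 2))) :
    IsConj !![0, -A.det; 1, A.trace] A := by
  obtain ⟨v, hv⟩ := exists_isUnit_krylov hA
  exact ⟨hv.unit, (mul_krylov A v).symm⟩

theorem isConj_of_trace_eq_of_det_eq (hA : A ∉ Set.range (scalar (Fin 2)))
    (hB : B ∉ Set.range (scalar (Fin 2))) (htr : A.trace = B.trace) (hdet : A.det = B.det) :
    IsConj A B := by
  have hB' := isConj_companion hB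
  rw [← htr, ← hdet] at hB'
  exact (isConj_companion hA).symm.trans hB'

end Field

namespace SpecialLinearGroup

variable {n K : Type*} [Fintype n] [DecidableEq n]

theorem coe_notMem_range_scalar_of_notMem_center [CommRing K] {A : SpecialLinearGroup n K}
    (hA : A ∉ center (SpecialLinearGroup n K)) : (A : Matrix n n K) ∉ Set.range (scalar n) := by
  rintro ⟨r, hr⟩
  refine hA (mem_center_iff.mpr ⟨r, ?_, hr⟩)
  simpa [← hr] using A.det_coe

theorem isConj_of_isConj_coe [Field K] [IsAlgClosed K] [Nonempty n]
    {A B : SpecialLinearGroup n K} (h : IsConj (A : Matrix n n K) B) : IsConj A B := by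
  obtain ⟨P, hP⟩ := h
  obtain ⟨c, hc⟩ := IsAlgClosed.exists_pow_nat_eq (P : Matrix n n K).det
    (Fintype.card_pos (α := n))
  have hc0 : c ≠ 0 := by
    rintro rfl
    exact ((isUnit_iff_isUnit_det _).mp P.isUnit).ne_zero (by simpa using hc.symm)
  let Q : SpecialLinearGroup n K := ⟨c⁻¹ • (P : Matrix n n K), by
    rw [det_smul, ← hc, inv_pow, inv_mul_cancel₀ (pow_ne_zero _ hc0)]⟩
  refine isConj_iff.mpr ⟨Q, mul_inv_eq_iff_eq_mul.mpr (Subtype.ext ?_)⟩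
  change c⁻¹ • (P : Matrix n n K) * A = B * (c⁻¹ • (P : Matrix n n K))
  rw [smul_mul_assoc, mul_smul_comm, hP.eq]

theorem isConj_of_trace_eq [Field K] [IsAlgClosed K] {A B : SpecialLinearGroup (Fin 2) K}
    (hA : A ∉ center (SpecialLinearGroup (Fin 2) K))
    (hB : B ∉ center (SpecialLinearGroup (Fin 2) K))
    (htr : (A : Matrix (Fin 2) (Fin 2) K).trace = (B : Matrix (Fin 2) (Fin 2) K).trace) :
    IsConj A B :=
  isConj_of_isConj_coe <| isConj_of_trace_eq_of_det_eq
    (coe_notMem_range_scalar_of_notMem_center hA) (coe_notMem_range_scalar_of_notMem_center hB)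
    htr (by simp)

open Complex

def diagI : SpecialLinearGroup (Fin 2) ℂ :=
  ⟨!![I, 0; 0, -I], by simp [det_fin_two]⟩

theorem coe_commutatorElement_diagI (X : SpecialLinearGroup (Fin 2) ℂ) :
    ((⁅diagI, X⁆ : SpecialLinearGroup (Fin 2) ℂ) : Matrix (Fin 2) (Fin 2) ℂ) =
      !![X 0 0 * X 1 1 + X 0 1 * X 1 0, -2 * X 0 0 * X 0 1;
        -2 * X 1 0 * X 1 1, X 0 0 * X 1 1 + X 0 1 * X 1 0] := by
  have hD : (diagI : Matrix (Fin 2) (Fin 2) ℂ) = !![I, 0; 0, -I] := rfl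
  rw [commutatorElement_def, coe_mul, coe_mul, coe_mul, coe_inv, coe_inv, hD,
    adjugate_fin_two_of, adjugate_fin_two (X : Matrix (Fin 2) (Fin 2) ℂ)]
  generalize (X : Matrix (Fin 2) (Fin 2) ℂ) = M
  rw [eta_fin_two M]
  simp only [mul_fin_two]
  ext i j
  fin_cases i <;> fin_cases j <;> simp <;> ring_nf <;> simp

theorem mem_commutatorSet_of_mem_center {B : SpecialLinearGroup (Fin 2) ℂ}
    (hB : B ∈ center (SpecialLinearGroup (Fin 2) ℂ)) :
    B ∈ commutatorSet (SpecialLinearGroup (Fin 2) ℂ) := by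
  obtain ⟨r, hr, hrB⟩ := SpecialLinearGroup.mem_center_iff.mp hB
  rw [Fintype.card_fin, sq_eq_one_iff] at hr
  rcases hr with rfl | rfl
  · obtain rfl : B = 1 := Subtype.ext (by simp [← hrB])
    exact one_mem_commutatorSet _
  · obtain ⟨J, hJ⟩ : ∃ J : SpecialLinearGroup (Fin 2) ℂ,
        (J : Matrix (Fin 2) (Fin 2) ℂ) = !![0, 1; -1, 0] :=
      ⟨⟨_, by simp [det_fin_two]⟩, rfl⟩
    refine ⟨diagI, J, Subtype.ext ?_⟩
    rw [coe_commutatorElement_diagI, ← hrB]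
    ext i j
    fin_cases i <;> fin_cases j <;> simp [hJ]

theorem exists_mem_commutatorSet_notMem_center_trace_eq (t : ℂ) :
    ∃ M ∈ commutatorSet (SpecialLinearGroup (Fin 2) ℂ),
      M ∉ center (SpecialLinearGroup (Fin 2) ℂ) ∧ (M : Matrix (Fin 2) (Fin 2) ℂ).trace = t := by
  -- `x w = (t + 2) / 4` and `y z = (t - 2) / 4`: determinant `1`, diagonal entries `t / 2`.
  obtain ⟨X, hX⟩ : ∃ X : SpecialLinearGroup (Fin 2) ℂ,
      (X : Matrix (Fin 2) (Fin 2) ℂ) = !![(t + 2) / 4, (t - 2) / 4; 1, 1] :=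
    ⟨⟨_, by simp [det_fin_two]; ring⟩, rfl⟩
  refine ⟨⁅diagI, X⁆, commutator_mem_commutatorSet _ _, fun hM ↦ ?_, ?_⟩
  · obtain ⟨r, -, hr⟩ := SpecialLinearGroup.mem_center_iff.mp hM
    have h10 := congrFun₂ hr 1 0
    rw [coe_commutatorElement_diagI] at h10
    norm_num [hX] at h10
  · rw [coe_commutatorElement_diagI, trace_fin_two]
    simp [hX]
    ring

end SpecialLinearGroup

end Matrix

/-- Every element of `SL(2,ℂ)` is a commutator. -/
theorem sl2_commutator_surjective (B : Matrix.SpecialLinearGroup (Fin 2) ℂ) :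
    ∃ A₁ A₂ : Matrix.SpecialLinearGroup (Fin 2) ℂ, A₁ * A₂ * A₁⁻¹ * A₂⁻¹ = B := by
  suffices hB : B ∈ commutatorSet (Matrix.SpecialLinearGroup (Fin 2) ℂ) from hB
  by_cases hBc : B ∈ center (Matrix.SpecialLinearGroup (Fin 2) ℂ)
  · exact SpecialLinearGroup.mem_commutatorSet_of_mem_center hBc
  · obtain ⟨M, hM, hMc, htr⟩ :=
      SpecialLinearGroup.exists_mem_commutatorSet_notMem_center_trace_eq
        (B : Matrix (Fin 2) (Fin 2) ℂ).trace
    exact (SpecialLinearGroup.isConj_of_trace_eq hMc hBc htr).mem_commutatorSet hM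
end

section
/- Let A and B be 2×2 complex matrices with det(A) = 0 and det(B) = 0. Then A·B·A*·B* = 0 if and only if at least one of A·B, B·A*, and A*·B* is the zero matrix. -/
/-!
A singular 2×2 matrix has rank at most one, `Y = u wᵀ`. If `X Y ≠ 0` then `X u ≠ 0`, so
`X Y Z = (X u)(wᵀ Z) = 0` forces `wᵀ Z = 0`, i.e. `Y Z = 0`: a singular factor can be cancelled
from a vanishing product on the left, unless it is already killed by the left factor.
Cancelling `A` (when `A B ≠ 0`) and then `B` (when `B A* ≠ 0`, using `det A* = det A = 0`)
turns `A B A* B* = 0` into `A* B* = 0`.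
-/

open Matrix

theorem Matrix.vecMulVec_mul_eq_zero_of_mul_vecMulVec_mul_eq_zero
    {n α : Type*} [Fintype n] [Semiring α] [NoZeroDivisors α]
    {X Z : Matrix n n α} {u w : n → α}
    (hXY : X * vecMulVec u w ≠ 0) (h : X * vecMulVec u w * Z = 0) :
    vecMulVec u w * Z = 0 := by
  rw [mul_vecMulVec] at hXY h
  rw [vecMulVec_mul] at h ⊢
  have hXu : X *ᵥ u ≠ 0 := fun hXu => hXY (by rw [hXu, zero_vecMulVec])
  have hwZ : w ᵥ* Z = 0 := (vecMulVec_eq_zero.mp h).resolve_left hXu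
  rw [hwZ, vecMulVec_zero]

theorem Matrix.exists_eq_vecMulVec_of_det_fin_two_eq_zero {K : Type*} [Field K]
    {Y : Matrix (Fin 2) (Fin 2) K} (h : Y.det = 0) :
    ∃ u w : Fin 2 → K, Y = vecMulVec u w := by
  rw [det_fin_two] at h
  by_cases h₀₀ : Y 0 0 = 0
  · by_cases h₀₁ : Y 0 1 = 0
    · refine ⟨![0, 1], Y 1, ?_⟩
      ext i j
      fin_cases i <;> fin_cases j <;> simp [vecMulVec_apply, h₀₀, h₀₁]
    · refine ⟨![1, Y 1 1 / Y 0 1], Y 0, ?_⟩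
      ext i j
      fin_cases i <;> fin_cases j <;>
        simp only [vecMulVec_apply, Fin.isValue, Fin.zero_eta, Fin.mk_one, cons_val_zero,
          cons_val_one, cons_val_fin_one, one_mul, mul_zero, h₀₀]
      · have : Y 0 1 * Y 1 0 = 0 := by linear_combination Y 1 1 * h₀₀ - h
        exact (mul_eq_zero.mp this).resolve_left h₀₁
      · rw [div_mul_cancel₀ _ h₀₁]
  · refine ⟨![1, Y 1 0 / Y 0 0], Y 0, ?_⟩
    ext i j
    fin_cases i <;> fin_cases j <;>
      simp only [vecMulVec_apply, Fin.isValue, Fin.zero_eta, Fin.mk_one, cons_val_zero,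
        cons_val_one, cons_val_fin_one, one_mul]
    · rw [div_mul_cancel₀ _ h₀₀]
    · field_simp
      linear_combination h

theorem Matrix.mul_eq_zero_of_mul_mul_eq_zero_of_det_fin_two_eq_zero {K : Type*} [Field K]
    {X Y Z : Matrix (Fin 2) (Fin 2) K} (hY : Y.det = 0) (hXY : X * Y ≠ 0)
    (h : X * Y * Z = 0) : Y * Z = 0 := by
  obtain ⟨u, w, rfl⟩ := exists_eq_vecMulVec_of_det_fin_two_eq_zero hY
  exact vecMulVec_mul_eq_zero_of_mul_vecMulVec_mul_eq_zero hXY h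

/-- For 2×2 complex matrices `A`, `B` of determinant zero:
`A·B·A*·B* = 0` iff at least one of `A·B`, `B·A*`, `A*·B*` is zero,
where `X*` is the adjugate of `X`. -/
theorem commutator_adjugate_eq_zero_iff (A B : Matrix (Fin 2) (Fin 2) ℂ)
    (hA : A.det = 0) (hB : B.det = 0) :
    A * B * A.adjugate * B.adjugate = 0 ↔
      A * B = 0 ∨ B * A.adjugate = 0 ∨ A.adjugate * B.adjugate = 0 := by
  have hAadj : A.adjugate.det = 0 := by simp [det_adjugate, hA]
  constructor
  · intro h
    refine or_iff_not_imp_left.mpr fun hAB => or_iff_not_imp_left.mpr fun hBA => ?_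
    have hBAB : B * A.adjugate * B.adjugate = 0 := by
      rw [Matrix.mul_assoc]
      exact mul_eq_zero_of_mul_mul_eq_zero_of_det_fin_two_eq_zero hB hAB
        (by rw [← Matrix.mul_assoc]; exact h)
    exact mul_eq_zero_of_mul_mul_eq_zero_of_det_fin_two_eq_zero hAadj hBA hBAB
  · rintro (h | h | h)
    · rw [h, Matrix.zero_mul, Matrix.zero_mul]
    · rw [Matrix.mul_assoc A B, h, Matrix.mul_zero, Matrix.zero_mul]
    · rw [Matrix.mul_assoc (A * B), h, Matrix.mul_zero]
end

section
/- (i) For every 2×2 complex matrix B with det(B) = 0 and tr(B) ≠ 0, there exist 2×2 complex matrices A₁, A₂ with det(A₁) = det(A₂) = 0, tr(A₁) = tr(A₂) = 0, and A₁·A₂ = B. (ii) If A₁, A₂ are 2×2 complex matrices with det(A₁) = det(A₂) = 0, tr(A₁) = tr(A₂) = 0, and tr(A₁·A₂) = 0, then A₁·A₂ = 0. -/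
/-!
(i) A singular `B` factors as `v wᵀ`, and then `tr B = v ⬝ w`. With `v⊥ = (-v₁, v₀)` one has
`v ⬝ v⊥ = 0` and `v⊥ ⬝ w⊥ = v ⬝ w`, so `B = (v v⊥ᵀ) (w⊥ wᵀ / tr B)` is a product of two rank-one
matrices of trace zero.

(ii) Write `A₁ = [[a, b], [c, -a]]` and `A₂ = [[p, q], [r, -p]]`. The squares of the off-diagonal
entries of `A₁A₂` and of the difference of its diagonal entries are linear combinations of
`det A₁ = -(a² + bc)`, `det A₂ = -(p² + qr)` and `tr (A₁A₂) = 2ap + br + cq`, so they vanish.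
-/

open Matrix

namespace Matrix

section CommRing

variable {R : Type*} [CommRing R]

def perp (v : Fin 2 → R) : Fin 2 → R := ![-v 1, v 0]

theorem dotProduct_perp_self (v : Fin 2 → R) : v ⬝ᵥ perp v = 0 := by
  simp only [perp, dotProduct, Fin.sum_univ_two, cons_val_zero, cons_val_one]
  ring

theorem perp_dotProduct_perp (v w : Fin 2 → R) : perp v ⬝ᵥ perp w = v ⬝ᵥ w := by
  simp only [perp, dotProduct, Fin.sum_univ_two, cons_val_zero, cons_val_one]
  ring

theorem exists_eq_of_trace_eq_zero {A : Matrix (Fin 2) (Fin 2) R} (h : A.trace = 0) :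
    ∃ a b c : R, A = !![a, b; c, -a] := by
  refine ⟨A 0 0, A 0 1, A 1 0, ?_⟩
  rw [trace_fin_two, add_eq_zero_iff_eq_neg'] at h
  rw [← h]
  exact eta_fin_two A

end CommRing

section Field

variable {K : Type*} [Field K]

theorem apply_mul_apply_eq_apply_mul_apply_of_det_eq_zero {B : Matrix (Fin 2) (Fin 2) K}
    (hdet : B.det = 0) (i j k l : Fin 2) : B i j * B k l = B i l * B k j := by
  rw [det_fin_two] at hdet
  fin_cases i <;> fin_cases j <;> fin_cases k <;> fin_cases l <;>
    simp only [Fin.zero_eta, Fin.mk_one] <;>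
    first | ring1 | linear_combination hdet | linear_combination -hdet

theorem exists_eq_vecMulVec_of_det_eq_zero {B : Matrix (Fin 2) (Fin 2) K} (hdet : B.det = 0) :
    ∃ v w : Fin 2 → K, B = vecMulVec v w := by
  by_cases hB : ∃ k l, B k l ≠ 0
  · obtain ⟨k, l, hkl⟩ := hB
    refine ⟨fun i => B i l, fun j => B k j / B k l, ?_⟩
    ext i j
    rw [vecMulVec_apply, mul_div_assoc', eq_div_iff hkl]
    exact apply_mul_apply_eq_apply_mul_apply_of_det_eq_zero hdet i j k l
  · push Not at hB
    exact ⟨0, 0, by ext i j; simp [hB]⟩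

theorem vecMulVec_eq_mul_of_dotProduct_ne_zero {v w : Fin 2 → K} (h : v ⬝ᵥ w ≠ 0) :
    vecMulVec v w = vecMulVec v (perp v) * vecMulVec ((v ⬝ᵥ w)⁻¹ • perp w) w := by
  rw [vecMulVec_mul_vecMulVec, dotProduct_smul, perp_dotProduct_perp, smul_eq_mul,
    inv_mul_cancel₀ h, one_smul]

theorem exists_mul_eq_of_det_eq_zero_of_trace_ne_zero {B : Matrix (Fin 2) (Fin 2) K}
    (hdet : B.det = 0) (htr : B.trace ≠ 0) :
    ∃ A₁ A₂ : Matrix (Fin 2) (Fin 2) K,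
      A₁.det = 0 ∧ A₂.det = 0 ∧ A₁.trace = 0 ∧ A₂.trace = 0 ∧ A₁ * A₂ = B := by
  obtain ⟨v, w, rfl⟩ := exists_eq_vecMulVec_of_det_eq_zero hdet
  rw [trace_vecMulVec] at htr
  refine ⟨_, _, det_vecMulVec _ _, det_vecMulVec _ _, ?_, ?_,
    (vecMulVec_eq_mul_of_dotProduct_ne_zero htr).symm⟩
  · rw [trace_vecMulVec, dotProduct_perp_self]
  · rw [trace_vecMulVec, smul_dotProduct, dotProduct_comm (perp w), dotProduct_perp_self,
      smul_zero]

theorem mul_eq_zero_of_det_eq_zero_of_trace_eq_zero [NeZero (2 : K)]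
    {A₁ A₂ : Matrix (Fin 2) (Fin 2) K} (hd₁ : A₁.det = 0) (hd₂ : A₂.det = 0)
    (ht₁ : A₁.trace = 0) (ht₂ : A₂.trace = 0) (ht : (A₁ * A₂).trace = 0) : A₁ * A₂ = 0 := by
  obtain ⟨a, b, c, rfl⟩ := exists_eq_of_trace_eq_zero ht₁
  obtain ⟨p, q, r, rfl⟩ := exists_eq_of_trace_eq_zero ht₂
  rw [det_fin_two_of] at hd₁ hd₂
  rw [mul_fin_two, trace_fin_two_of] at ht
  rw [mul_fin_two]
  -- `b r` and `c q` have sum `-2ap` and product `(bc)(qr) = a²p²`, so both equal `-ap`.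
  have hbr : b * r = c * q := by
    have : (b * r - c * q) ^ 2 = 0 := by
      linear_combination (b * r + c * q - 2 * a * p) * ht + 4 * q * r * hd₁ - 4 * a ^ 2 * hd₂
    exact sub_eq_zero.mp (pow_eq_zero_iff two_ne_zero |>.mp this)
  have h₀₀ : a * p + b * r = 0 := by
    have : 2 * (a * p + b * r) = 0 := by linear_combination ht + hbr
    exact (mul_eq_zero.mp this).resolve_left two_ne_zero
  have h₀₁ : a * q + b * -p = 0 :=
    pow_eq_zero_iff two_ne_zero |>.mp <| by
      linear_combination -q ^ 2 * hd₁ - b ^ 2 * hd₂ - b * q * ht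
  have h₁₀ : c * p + -a * r = 0 :=
    pow_eq_zero_iff two_ne_zero |>.mp <| by
      linear_combination -r ^ 2 * hd₁ - c ^ 2 * hd₂ - c * r * ht
  rw [h₀₀, h₀₁, h₁₀, show c * q + -a * -p = 0 by linear_combination ht - h₀₀]
  exact (eta_fin_two 0).symm

end Field

end Matrix

/-- (i) Every 2×2 complex matrix `B` with `det B = 0` and `tr B ≠ 0` is a product of two
matrices of determinant zero and trace zero.  (ii) If `A₁, A₂` have determinant zero and
trace zero and `tr (A₁A₂) = 0`, then `A₁A₂ = 0`. -/
theorem product_of_traceless_det_zero :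
    (∀ B : Matrix (Fin 2) (Fin 2) ℂ, B.det = 0 → B.trace ≠ 0 →
      ∃ A₁ A₂ : Matrix (Fin 2) (Fin 2) ℂ,
        A₁.det = 0 ∧ A₂.det = 0 ∧ A₁.trace = 0 ∧ A₂.trace = 0 ∧ A₁ * A₂ = B) ∧
    (∀ A₁ A₂ : Matrix (Fin 2) (Fin 2) ℂ, A₁.det = 0 → A₂.det = 0 →
      A₁.trace = 0 → A₂.trace = 0 → (A₁ * A₂).trace = 0 → A₁ * A₂ = 0) :=
  ⟨fun _ => exists_mul_eq_of_det_eq_zero_of_trace_ne_zero,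
    fun _ _ => mul_eq_zero_of_det_eq_zero_of_trace_eq_zero⟩
end

section
/- Let m ≥ 3 be an integer, and for 1 ≤ r ≤ m − 3 let N_m(r) denote the number of r-element sets of pairwise noncrossing diagonals of a convex m-gon. Then Σ_{r=1}^{m−3} (−1)^{r−1} N_m(r) = 1 + (−1)^m. -/
/-- `x` lies strictly inside the open cyclic arc from `a` to `b` (counterclockwise),
where the vertices of the convex `m`-gon are labeled by `ZMod m` in cyclic order. -/
def InOpenArc (m : ℕ) (a x b : ZMod m) : Prop :=
  0 < (x - a).val ∧ (x - a).val < (b - a).val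

/-- `e` is a diagonal of the convex `m`-gon: an unordered pair `{i, j}` of vertices with
`j ∉ {i − 1, i, i + 1}`. -/
def IsDiagonal (m : ℕ) (e : Sym2 (ZMod m)) : Prop :=
  ∃ i j : ZMod m, e = s(i, j) ∧ j ≠ i - 1 ∧ j ≠ i ∧ j ≠ i + 1

/-- Two chords `{a, b}` and `{c, d}` cross if their endpoints strictly interleave in
cyclic order: one of `c, d` lies in the open arc from `a` to `b` and the other in the
open arc from `b` to `a`. -/
def Crossing (m : ℕ) (e f : Sym2 (ZMod m)) : Prop :=
  ∃ a b c d : ZMod m, e = s(a, b) ∧ f = s(c, d) ∧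
    ((InOpenArc m a c b ∧ InOpenArc m b d a) ∨ (InOpenArc m a d b ∧ InOpenArc m b c a))

/-- `N_m(r)`: the number of `r`-element sets of pairwise noncrossing diagonals of a
convex `m`-gon. -/
noncomputable def noncrossingDiagonalSets (m r : ℕ) : ℕ :=
  Nat.card {S : Finset (Sym2 (ZMod m)) //
    S.card = r ∧ (∀ e ∈ S, IsDiagonal m e) ∧
    ∀ e ∈ S, ∀ f ∈ S, e ≠ f → ¬ Crossing m e f}

/-!
Encode a diagonal `{a, b}`, `a < b`, of the `m`-gon by the pair `(a, b) : ℕ × ℕ` and let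
`χ(m) = ∑ (-1) ^ |S|` over all noncrossing sets `S`, the empty one included. Then `χ(3) = 1` and
`χ(m + 1) = -χ(m)`: the sets containing the diagonal `(0, 2)` are, after deleting the vertex `1`
that it cuts off, the noncrossing sets of the `m`-gon plus one diagonal, and on the other sets
toggling the diagonal from `1` to the first neighbor of `0` is a sign-reversing involution.
A noncrossing set has at most `m - 3` diagonals, since the shortest one cuts off a vertex carrying
no diagonal, which can be deleted. Hence `χ(m) = 1 - ∑_{r=1}^{m-3} (-1) ^ (r - 1) N_m(r)`.
-/

namespace NoncrossingDiagonals

open Finset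

section Toggle

variable {α : Type*} [DecidableEq α]

def toggle (a : α) (S : Finset α) : Finset α :=
  if a ∈ S then S.erase a else insert a S

lemma toggle_toggle (a : α) (S : Finset α) : toggle a (toggle a S) = S := by
  by_cases h : a ∈ S <;> simp [toggle, h]

lemma mem_toggle_of_ne {a b : α} {S : Finset α} (h : b ≠ a) : b ∈ toggle a S ↔ b ∈ S := by
  by_cases ha : a ∈ S <;> simp [toggle, ha, h]

lemma neg_one_pow_card_toggle (a : α) (S : Finset α) :
    (-1 : ℤ) ^ #(toggle a S) = -(-1) ^ #S := by
  by_cases h : a ∈ S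
  · rw [toggle, if_pos h, ← card_erase_add_one h, pow_succ]
    ring
  · rw [toggle, if_neg h, card_insert_of_notMem h, pow_succ]
    ring

theorem sum_neg_one_pow_card_eq_zero (F : Finset (Finset α)) (a : Finset α → α)
    (hmem : ∀ S ∈ F, toggle (a S) S ∈ F) (hinv : ∀ S ∈ F, a (toggle (a S) S) = a S) :
    ∑ S ∈ F, (-1 : ℤ) ^ #S = 0 := by
  refine sum_involution (fun S _ => toggle (a S) S) (fun S _ => ?_) (fun S _ _ h => ?_) hmem
    (fun S hS => by rw [hinv S hS, toggle_toggle])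
  · rw [neg_one_pow_card_toggle]
    ring
  · have := neg_one_pow_card_toggle (a S) S
    rw [h] at this
    have := neg_one_pow_eq_or ℤ #S
    omega

end Toggle

/-- Crossing of chords of a polygon with vertices `0, 1, 2, …` in cyclic order, a chord being
encoded by its endpoints in increasing order. -/
def Cross (e f : ℕ × ℕ) : Prop :=
  e.1 < f.1 ∧ f.1 < e.2 ∧ e.2 < f.2 ∨ f.1 < e.1 ∧ e.1 < f.2 ∧ f.2 < e.2

instance : DecidableRel Cross := fun _ _ => by unfold Cross; infer_instance

lemma not_cross_self (e : ℕ × ℕ) : ¬ Cross e e := by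
  unfold Cross
  omega

lemma cross_map_iff {g : ℕ → ℕ} (hg : StrictMono g) {e f : ℕ × ℕ} :
    Cross (Prod.map g g e) (Prod.map g g f) ↔ Cross e f := by
  simp only [Cross, Prod.map_fst, Prod.map_snd, hg.lt_iff_lt]

def diagonals (m : ℕ) : Finset (ℕ × ℕ) :=
  {e ∈ range m ×ˢ range m | e.1 + 2 ≤ e.2 ∧ e.2 + 2 ≤ e.1 + m}

lemma mem_diagonals {m : ℕ} {e : ℕ × ℕ} :
    e ∈ diagonals m ↔ e.1 + 2 ≤ e.2 ∧ e.2 + 2 ≤ e.1 + m ∧ e.2 < m := by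
  simp only [diagonals, mem_filter, mem_product, mem_range]
  omega

def noncrossingSets (m : ℕ) : Finset (Finset (ℕ × ℕ)) :=
  {S ∈ (diagonals m).powerset | ∀ e ∈ S, ∀ f ∈ S, ¬ Cross e f}

lemma mem_noncrossingSets {m : ℕ} {S : Finset (ℕ × ℕ)} :
    S ∈ noncrossingSets m ↔ S ⊆ diagonals m ∧ ∀ e ∈ S, ∀ f ∈ S, ¬ Cross e f := by
  rw [noncrossingSets, mem_filter, mem_powerset]

lemma mem_noncrossingSets_of_subset {m : ℕ} {S T : Finset (ℕ × ℕ)} (hTS : T ⊆ S)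
    (hS : S ∈ noncrossingSets m) : T ∈ noncrossingSets m := by
  rw [mem_noncrossingSets] at hS ⊢
  exact ⟨hTS.trans hS.1, fun e he f hf => hS.2 e (hTS he) f (hTS hf)⟩

lemma insert_mem_noncrossingSets {m : ℕ} {a : ℕ × ℕ} {S : Finset (ℕ × ℕ)}
    (hS : S ∈ noncrossingSets m) (ha : a ∈ diagonals m) (hcompat : ∀ e ∈ S, ¬ Cross a e) :
    insert a S ∈ noncrossingSets m := by
  rw [mem_noncrossingSets] at hS ⊢
  refine ⟨insert_subset ha hS.1, ?_⟩
  have hcompat' : ∀ e ∈ S, ¬ Cross e a := fun e he hc =>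
    hcompat e he (by unfold Cross at hc ⊢; omega)
  simp only [mem_insert, forall_eq_or_imp]
  exact ⟨⟨not_cross_self a, hcompat⟩, fun e he => ⟨hcompat' e he, hS.2 e he⟩⟩

lemma toggle_mem_noncrossingSets {m : ℕ} {a : ℕ × ℕ} {S : Finset (ℕ × ℕ)}
    (hS : S ∈ noncrossingSets m) (ha : a ∈ diagonals m) (hcompat : ∀ e ∈ S, ¬ Cross a e) :
    toggle a S ∈ noncrossingSets m := by
  by_cases h : a ∈ S
  · rw [toggle, if_pos h]
    exact mem_noncrossingSets_of_subset (erase_subset a S) hS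
  · rw [toggle, if_neg h]
    exact insert_mem_noncrossingSets hS ha hcompat

/-- The diagonal cutting off the vertex `c + 1`. -/
def ear (c : ℕ) : ℕ × ℕ := (c, c + 2)

/-- Relabelling of the vertices that makes room for a new vertex `c + 1`. -/
def skip (c v : ℕ) : ℕ := if v ≤ c then v else v + 1

lemma strictMono_skip (c : ℕ) : StrictMono (skip c) := by
  intro v w h
  simp only [skip]
  split_ifs <;> omega

lemma skip_ne (c v : ℕ) : skip c v ≠ c + 1 := by
  simp only [skip]
  split_ifs <;> omega

/-- Glue a triangle `c, c + 1, c + 2` onto the edge `{c, c + 1}` of an `m`-gon, keeping the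
diagonal along which it is glued. -/
def glueEar (c : ℕ) (S : Finset (ℕ × ℕ)) : Finset (ℕ × ℕ) :=
  insert (ear c) (S.image (Prod.map (skip c) (skip c)))

lemma cross_ear_iff {c : ℕ} {e : ℕ × ℕ} (he : e.1 + 2 ≤ e.2) :
    Cross (ear c) e ↔ e.1 = c + 1 ∨ e.2 = c + 1 := by
  simp only [Cross, ear]
  omega

lemma ear_mem_diagonals {m c : ℕ} (hm : 3 ≤ m) (hc : c + 2 ≤ m) : ear c ∈ diagonals (m + 1) := by
  simp only [mem_diagonals, ear]
  omega

lemma map_skip_mem_diagonals {m c : ℕ} {e : ℕ × ℕ} (he : e ∈ diagonals m) :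
    Prod.map (skip c) (skip c) e ∈ diagonals (m + 1) := by
  rw [mem_diagonals] at he ⊢
  simp only [Prod.map_fst, Prod.map_snd, skip]
  split_ifs <;> omega

lemma exists_map_skip_eq {m c : ℕ} (hc : c + 2 ≤ m) {e : ℕ × ℕ} (he : e ∈ diagonals (m + 1))
    (h₁ : e.1 ≠ c + 1) (h₂ : e.2 ≠ c + 1) (hne : e ≠ ear c) :
    ∃ e' ∈ diagonals m, Prod.map (skip c) (skip c) e' = e := by
  have hne' : ¬ (e.1 = c ∧ e.2 = c + 2) := fun h => hne (Prod.ext h.1 h.2)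
  rw [mem_diagonals] at he
  refine ⟨(if e.1 ≤ c then e.1 else e.1 - 1, if e.2 ≤ c then e.2 else e.2 - 1), ?_, ?_⟩
  · rw [mem_diagonals]
    split_ifs <;> omega
  · refine Prod.ext ?_ ?_ <;> simp only [Prod.map_fst, Prod.map_snd, skip] <;> split_ifs <;> omega

lemma glueEar_mem_noncrossingSets {m c : ℕ} (hm : 3 ≤ m) (hc : c + 2 ≤ m) {S : Finset (ℕ × ℕ)}
    (hS : S ∈ noncrossingSets m) : glueEar c S ∈ noncrossingSets (m + 1) := by
  rw [mem_noncrossingSets] at hS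
  have hsub : S.image (Prod.map (skip c) (skip c)) ∈ noncrossingSets (m + 1) := by
    simp only [mem_noncrossingSets, image_subset_iff, forall_mem_image,
      cross_map_iff (strictMono_skip c)]
    exact ⟨fun e he => map_skip_mem_diagonals (hS.1 he), hS.2⟩
  refine insert_mem_noncrossingSets hsub (ear_mem_diagonals hm hc) ?_
  simp only [forall_mem_image]
  intro e he
  rw [cross_ear_iff (mem_diagonals.mp (map_skip_mem_diagonals (c := c) (hS.1 he))).1]
  simp only [Prod.map_fst, Prod.map_snd, skip_ne, or_self, not_false_eq_true]

lemma ear_notMem_image {m c : ℕ} {S : Finset (ℕ × ℕ)} (hS : S ⊆ diagonals m) :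
    ear c ∉ S.image (Prod.map (skip c) (skip c)) := by
  simp only [mem_image, not_exists, not_and]
  intro e he h
  have he' := mem_diagonals.mp (hS he)
  simp only [ear, Prod.ext_iff, Prod.map_fst, Prod.map_snd, skip] at h
  split_ifs at h <;> omega

lemma card_glueEar {m c : ℕ} {S : Finset (ℕ × ℕ)} (hS : S ∈ noncrossingSets m) :
    #(glueEar c S) = #S + 1 := by
  have hinj := (strictMono_skip c).injective
  rw [glueEar, card_insert_of_notMem (ear_notMem_image (mem_noncrossingSets.mp hS).1),
    card_image_of_injective _ (hinj.prodMap hinj)]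

lemma injOn_glueEar (m c : ℕ) : Set.InjOn (glueEar c) (noncrossingSets m) := by
  intro S hS T hT h
  have hinj := (strictMono_skip c).injective
  apply image_injective (hinj.prodMap hinj)
  rw [← erase_insert (ear_notMem_image (mem_noncrossingSets.mp hS).1),
    ← erase_insert (ear_notMem_image (mem_noncrossingSets.mp hT).1)]
  exact congrArg (erase · (ear c)) h

lemma exists_glueEar_eq {m c : ℕ} (hc : c + 2 ≤ m) {S : Finset (ℕ × ℕ)}
    (hS : S ∈ noncrossingSets (m + 1)) (hear : ear c ∈ S) :
    ∃ S' ∈ noncrossingSets m, glueEar c S' = S := by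
  rw [mem_noncrossingSets] at hS
  refine ⟨{e ∈ diagonals m | Prod.map (skip c) (skip c) e ∈ S}, ?_, ?_⟩
  · rw [mem_noncrossingSets]
    refine ⟨filter_subset _ _, fun e he f hf => ?_⟩
    rw [← cross_map_iff (strictMono_skip c)]
    exact hS.2 _ (mem_filter.mp he).2 _ (mem_filter.mp hf).2
  · ext e
    simp only [glueEar, mem_insert, mem_image, mem_filter]
    constructor
    · rintro (rfl | ⟨e', ⟨-, he'⟩, rfl⟩)
      exacts [hear, he']
    · intro he
      by_cases hne : e = ear c
      · exact Or.inl hne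
      have hd := hS.1 he
      have hfree : ¬ Cross (ear c) e := hS.2 _ hear _ he
      rw [cross_ear_iff (mem_diagonals.mp hd).1, not_or] at hfree
      obtain ⟨e', he', rfl⟩ := exists_map_skip_eq hc hd hfree.1 hfree.2 hne
      exact Or.inr ⟨e', ⟨he', he⟩, rfl⟩

lemma image_glueEar {m c : ℕ} (hm : 3 ≤ m) (hc : c + 2 ≤ m) :
    (noncrossingSets m).image (glueEar c) = {S ∈ noncrossingSets (m + 1) | ear c ∈ S} := by
  ext S
  simp only [mem_image, mem_filter]
  constructor
  · rintro ⟨S', hS', rfl⟩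
    exact ⟨glueEar_mem_noncrossingSets hm hc hS', mem_insert_self _ _⟩
  · rintro ⟨hS, hear⟩
    exact exists_glueEar_eq hc hS hear

lemma noncrossingSets_of_le_three {m : ℕ} (hm : m ≤ 3) : noncrossingSets m = {∅} := by
  have : diagonals m = ∅ := by
    ext e
    simp only [mem_diagonals, notMem_empty, iff_false]
    omega
  rw [noncrossingSets, this, powerset_empty, filter_singleton, if_pos (by simp)]

/-- The shortest diagonal `(a, b)` of `S` leaves the vertex `a + 1` free: a diagonal there would
be shorter or would cross `(a, b)`. -/
lemma exists_ear_compatible {m : ℕ} (hm : 2 ≤ m) {S : Finset (ℕ × ℕ)}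
    (hS : S ∈ noncrossingSets (m + 1)) : ∃ c, c + 2 ≤ m ∧ ∀ e ∈ S, ¬ Cross (ear c) e := by
  rw [mem_noncrossingSets] at hS
  rcases S.eq_empty_or_nonempty with rfl | hne
  · exact ⟨0, by omega, by simp⟩
  obtain ⟨d, hd, hmin⟩ := exists_min_image S (fun e => e.2 - e.1) hne
  have hd' := mem_diagonals.mp (hS.1 hd)
  refine ⟨d.1, by omega, fun e he hcross => ?_⟩
  have he' := mem_diagonals.mp (hS.1 he)
  have := hmin e he
  have := hS.2 d hd e he
  rw [cross_ear_iff he'.1] at hcross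
  simp only [Cross] at *
  omega

theorem card_le_of_mem_noncrossingSets {m : ℕ} {S : Finset (ℕ × ℕ)}
    (hS : S ∈ noncrossingSets m) : #S ≤ m - 3 := by
  induction m generalizing S with
  | zero => simp [mem_singleton.mp (noncrossingSets_of_le_three (Nat.zero_le 3) ▸ hS)]
  | succ m ih =>
    rcases lt_or_ge m 3 with hm | hm
    · simp [mem_singleton.mp (noncrossingSets_of_le_three (by omega : m + 1 ≤ 3) ▸ hS)]
    obtain ⟨c, hc, hfree⟩ := exists_ear_compatible (by omega) hS
    have hins := insert_mem_noncrossingSets hS (ear_mem_diagonals hm hc) hfree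
    obtain ⟨S', hS', heq⟩ := exists_glueEar_eq hc hins (mem_insert_self _ _)
    have := card_le_card (subset_insert (ear c) S)
    rw [← heq, card_glueEar hS'] at this
    have := ih hS'
    omega

def signedCount (m : ℕ) : ℤ := ∑ S ∈ noncrossingSets m, (-1 : ℤ) ^ #S

def firstNeighbor (m : ℕ) (S : Finset (ℕ × ℕ)) : ℕ :=
  (insert m ({e ∈ S | e.1 = 0}.image Prod.snd)).min' (insert_nonempty _ _)

section FirstNeighbor

variable {m : ℕ} {S : Finset (ℕ × ℕ)}

lemma firstNeighbor_le_self : firstNeighbor m S ≤ m :=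
  min'_le _ _ (mem_insert_self _ _)

lemma firstNeighbor_le {y : ℕ} (h : (0, y) ∈ S) : firstNeighbor m S ≤ y := by
  refine min'_le _ _ (mem_insert_of_mem (mem_image.mpr ⟨(0, y), ?_, rfl⟩))
  exact mem_filter.mpr ⟨h, rfl⟩

lemma firstNeighbor_eq_self_or_mem : firstNeighbor m S = m ∨ (0, firstNeighbor m S) ∈ S := by
  have h := min'_mem (insert m ({e ∈ S | e.1 = 0}.image Prod.snd)) (insert_nonempty _ _)
  simp only [mem_insert, mem_image, mem_filter] at h
  rcases h with h | ⟨e, ⟨he, he₁⟩, he₂⟩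
  · exact Or.inl h
  · refine Or.inr ?_
    rwa [firstNeighbor, ← he₂, ← he₁]

lemma firstNeighbor_toggle (y : ℕ) : firstNeighbor m (toggle (1, y) S) = firstNeighbor m S := by
  have : {e ∈ toggle (1, y) S | e.1 = 0} = {e ∈ S | e.1 = 0} := by
    ext e
    simp only [mem_filter]
    refine and_congr_left fun he => mem_toggle_of_ne ?_
    rintro rfl
    simp at he
  simp only [firstNeighbor, this]

end FirstNeighbor

/-- Toggling the diagonal from `1` to the first neighbor of `0` (or to `m` if there is none)
cancels these sets in pairs; it is a diagonal because `(0, 2) ∉ S`. -/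
lemma sum_filter_ear_notMem {m : ℕ} (hm : 3 ≤ m) :
    ∑ S ∈ {S ∈ noncrossingSets (m + 1) | ear 0 ∉ S}, (-1 : ℤ) ^ #S = 0 := by
  refine sum_neg_one_pow_card_eq_zero _ (fun S => (1, firstNeighbor m S)) (fun S hS => ?_)
    (fun S _ => by simp only [firstNeighbor_toggle])
  obtain ⟨hS, hear⟩ := mem_filter.mp hS
  obtain ⟨hsub, hnc⟩ := mem_noncrossingSets.mp hS
  have hle : firstNeighbor m S ≤ m := firstNeighbor_le_self
  have hy : firstNeighbor m S = m ∨ 3 ≤ firstNeighbor m S ∧ (0, firstNeighbor m S) ∈ S := by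
    refine firstNeighbor_eq_self_or_mem.imp_right fun h => ⟨?_, h⟩
    have := (mem_diagonals.mp (hsub h)).1
    have : firstNeighbor m S ≠ 2 := fun h2 => hear (by rwa [h2] at h)
    omega
  refine mem_filter.mpr ⟨toggle_mem_noncrossingSets hS ?_ fun e he hcross => ?_, ?_⟩
  · rw [mem_diagonals]
    omega
  · have he' := mem_diagonals.mp (hsub he)
    simp only [Cross] at hcross
    rcases hcross with hcross | hcross
    · rcases hy with h | ⟨-, h⟩
      · omega
      · exact hnc _ h e he (by simp only [Cross]; omega)
    · have := firstNeighbor_le (m := m) (show (0, e.2) ∈ S by rwa [← show e.1 = 0 by omega])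
      omega
  · rwa [mem_toggle_of_ne (by simp [ear])]

theorem signedCount_succ {m : ℕ} (hm : 3 ≤ m) : signedCount (m + 1) = -signedCount m := by
  rw [signedCount, ← sum_filter_add_sum_filter_not _ (ear 0 ∈ ·), sum_filter_ear_notMem hm,
    add_zero, ← image_glueEar hm (by omega), sum_image (injOn_glueEar m 0), signedCount,
    ← sum_neg_distrib]
  refine sum_congr rfl fun S hS => ?_
  rw [card_glueEar hS, pow_succ]
  ring

theorem signedCount_eq {m : ℕ} (hm : 3 ≤ m) : signedCount m = (-1) ^ (m - 1) := by
  induction m, hm using Nat.le_induction with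
  | base => simp [signedCount, noncrossingSets_of_le_three le_rfl]
  | succ m hm ih =>
    rw [signedCount_succ hm, ih, show m + 1 - 1 = m - 1 + 1 by omega, pow_succ]
    ring

lemma empty_mem_noncrossingSets (m : ℕ) : ∅ ∈ noncrossingSets m := by
  simp [mem_noncrossingSets]

lemma signedCount_eq_one_add_sum (m : ℕ) :
    signedCount m = 1 + ∑ r ∈ Icc 1 (m - 3), (-1 : ℤ) ^ r * #{S ∈ noncrossingSets m | #S = r} := by
  have hmaps : ∀ S ∈ noncrossingSets m, #S ∈ insert 0 (Icc 1 (m - 3)) := fun S hS => by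
    have := card_le_of_mem_noncrossingSets hS
    simp only [mem_insert, mem_Icc]
    omega
  have hzero : {S ∈ noncrossingSets m | #S = 0} = {∅} := by
    ext S
    simp only [mem_filter, card_eq_zero, mem_singleton, and_iff_right_iff_imp]
    rintro rfl
    exact empty_mem_noncrossingSets m
  rw [signedCount, ← sum_fiberwise_of_maps_to hmaps, sum_insert (by simp), hzero, sum_singleton,
    card_empty, pow_zero]
  refine congrArg _ (sum_congr rfl fun r _ => ?_)
  rw [sum_congr rfl fun S hS => by rw [(mem_filter.mp hS).2], sum_const, nsmul_eq_mul, mul_comm]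

section Polygon

variable {m : ℕ} [NeZero m]

lemma val_sub_of_lt {a x : ZMod m} (h : x.val < a.val) : (x - a).val = x.val + m - a.val := by
  have hne : a - x ≠ 0 := sub_ne_zero.mpr fun h' => by rw [h'] at h; omega
  rw [← neg_sub, ZMod.neg_val, if_neg hne, ZMod.val_sub h.le]
  have := a.val_lt
  omega

lemma inOpenArc_iff {a b x : ZMod m} (hab : a.val < b.val) :
    InOpenArc m a x b ↔ a.val < x.val ∧ x.val < b.val := by
  rw [InOpenArc, ZMod.val_sub hab.le]
  rcases le_or_gt a.val x.val with h | h
  · rw [ZMod.val_sub h]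
    omega
  · rw [val_sub_of_lt h]
    have := b.val_lt
    omega

lemma inOpenArc_swap_iff {a b x : ZMod m} (hab : a.val < b.val) :
    InOpenArc m b x a ↔ x.val < a.val ∨ b.val < x.val := by
  rw [InOpenArc, val_sub_of_lt hab]
  rcases le_or_gt b.val x.val with h | h
  · rw [ZMod.val_sub h]
    have := x.val_lt
    omega
  · rw [val_sub_of_lt h]
    have := b.val_lt
    omega

omit [NeZero m] in
lemma crossing_mk_iff {a b c d : ZMod m} :
    Crossing m s(a, b) s(c, d) ↔
      InOpenArc m a c b ∧ InOpenArc m b d a ∨ InOpenArc m a d b ∧ InOpenArc m b c a := by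
  refine ⟨?_, fun h => ⟨a, b, c, d, rfl, rfl, h⟩⟩
  rintro ⟨a', b', c', d', h₁, h₂, h⟩
  rcases Sym2.eq_iff.mp h₁ with ⟨rfl, rfl⟩ | ⟨rfl, rfl⟩ <;>
    rcases Sym2.eq_iff.mp h₂ with ⟨rfl, rfl⟩ | ⟨rfl, rfl⟩ <;> tauto

lemma crossing_mk_iff_cross {a b c d : ZMod m} (hab : a.val < b.val) (hcd : c.val < d.val) :
    Crossing m s(a, b) s(c, d) ↔ Cross (a.val, b.val) (c.val, d.val) := by
  rw [crossing_mk_iff, inOpenArc_iff hab, inOpenArc_iff hab, inOpenArc_swap_iff hab,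
    inOpenArc_swap_iff hab, Cross]
  omega

omit [NeZero m] in
lemma isDiagonal_mk_iff {a b : ZMod m} :
    IsDiagonal m s(a, b) ↔ b ≠ a + 1 ∧ b ≠ a ∧ a ≠ b + 1 := by
  refine ⟨?_, fun h => ⟨a, b, rfl, fun h' => h.2.2 (eq_sub_iff_add_eq.mp h').symm, h.2.1, h.1⟩⟩
  rintro ⟨a', b', h₁, h⟩
  rcases Sym2.eq_iff.mp h₁ with ⟨rfl, rfl⟩ | ⟨rfl, rfl⟩
  · exact ⟨h.2.2, h.2.1, fun h' => h.1 (eq_sub_iff_add_eq.mpr h'.symm)⟩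
  · exact ⟨fun h' => h.1 (eq_sub_iff_add_eq.mpr h'.symm), fun h' => h.2.1 h'.symm, h.2.2⟩

lemma isDiagonal_mk_iff_mem_diagonals {a b : ZMod m} (hab : a.val < b.val) :
    IsDiagonal m s(a, b) ↔ (a.val, b.val) ∈ diagonals m := by
  have : Fact (1 < m) := ⟨by have := b.val_lt; omega⟩
  have eq_add_one_iff : ∀ x y : ZMod m, y = x + 1 ↔ (y - x).val = 1 := fun x y => by
    rw [← ZMod.val_one m, (ZMod.val_injective m).eq_iff, sub_eq_iff_eq_add']
  simp only [isDiagonal_mk_iff, ne_eq, eq_add_one_iff, ZMod.val_sub hab.le, val_sub_of_lt hab,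
    ← (ZMod.val_injective m).eq_iff, mem_diagonals]
  have := b.val_lt
  omega

def ofPair (m : ℕ) (p : ℕ × ℕ) : Sym2 (ZMod m) := s((p.1 : ZMod m), (p.2 : ZMod m))

omit [NeZero m] in
lemma val_natCast_of_mem_diagonals {p : ℕ × ℕ} (hp : p ∈ diagonals m) :
    (p.1 : ZMod m).val = p.1 ∧ (p.2 : ZMod m).val = p.2 := by
  have := mem_diagonals.mp hp
  exact ⟨ZMod.val_natCast_of_lt (by omega), ZMod.val_natCast_of_lt this.2.2⟩

lemma isDiagonal_ofPair {p : ℕ × ℕ} (hp : p ∈ diagonals m) : IsDiagonal m (ofPair m p) := by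
  obtain ⟨h₁, h₂⟩ := val_natCast_of_mem_diagonals hp
  have := mem_diagonals.mp hp
  rw [ofPair, isDiagonal_mk_iff_mem_diagonals (by omega), h₁, h₂]
  exact hp

lemma crossing_ofPair_iff {p q : ℕ × ℕ} (hp : p ∈ diagonals m) (hq : q ∈ diagonals m) :
    Crossing m (ofPair m p) (ofPair m q) ↔ Cross p q := by
  obtain ⟨hp₁, hp₂⟩ := val_natCast_of_mem_diagonals hp
  obtain ⟨hq₁, hq₂⟩ := val_natCast_of_mem_diagonals hq
  have := mem_diagonals.mp hp
  have := mem_diagonals.mp hq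
  rw [ofPair, ofPair, crossing_mk_iff_cross (by omega) (by omega), hp₁, hp₂, hq₁, hq₂]

omit [NeZero m] in
lemma injOn_ofPair : Set.InjOn (ofPair m) (diagonals m) := by
  intro p hp q hq h
  obtain ⟨hp₁, hp₂⟩ := val_natCast_of_mem_diagonals hp
  obtain ⟨hq₁, hq₂⟩ := val_natCast_of_mem_diagonals hq
  have := mem_diagonals.mp (Finset.mem_coe.mp hp)
  have := mem_diagonals.mp (Finset.mem_coe.mp hq)
  rcases Sym2.eq_iff.mp h with ⟨h₁, h₂⟩ | ⟨h₁, h₂⟩ <;>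
    have h₁ := congrArg ZMod.val h₁ <;> have h₂ := congrArg ZMod.val h₂ <;>
    rw [hp₁, hp₂, hq₁, hq₂] at * <;> first | exact Prod.ext h₁ h₂ | omega

lemma exists_ofPair_eq {e : Sym2 (ZMod m)} (he : IsDiagonal m e) :
    ∃ p ∈ diagonals m, ofPair m p = e := by
  have key : ∀ a b : ZMod m, a.val < b.val → IsDiagonal m s(a, b) →
      ∃ p ∈ diagonals m, ofPair m p = s(a, b) := fun a b hab h =>
    ⟨(a.val, b.val), (isDiagonal_mk_iff_mem_diagonals hab).mp h,
      by simp only [ofPair, ZMod.natCast_zmod_val]⟩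
  obtain ⟨a, b, rfl, -, hne, -⟩ := id he
  rcases lt_or_gt_of_ne ((ZMod.val_injective m).ne hne.symm) with hab | hab
  · exact key a b hab he
  · rw [Sym2.eq_swap] at he ⊢
    exact key b a hab he

theorem noncrossingDiagonalSets_eq_card (r : ℕ) :
    noncrossingDiagonalSets m r = #{S ∈ noncrossingSets m | #S = r} := by
  have hinj : Set.InjOn (image (ofPair m)) ({S ∈ noncrossingSets m | #S = r} : Finset _) :=
    (image_injOn_powerset_of_injOn injOn_ofPair).mono fun S hS =>
      mem_powerset.mpr (mem_noncrossingSets.mp (mem_filter.mp hS).1).1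
  have hset : {S : Finset (Sym2 (ZMod m)) | #S = r ∧ (∀ e ∈ S, IsDiagonal m e) ∧
      ∀ e ∈ S, ∀ f ∈ S, e ≠ f → ¬ Crossing m e f} =
      ({S ∈ noncrossingSets m | #S = r}.image (image (ofPair m)) : Set _) := by
    ext S
    simp only [Set.mem_ofPred_eq, coe_image, coe_filter, Set.mem_image]
    constructor
    · rintro ⟨hcard, hdiag, hnc⟩
      have himage : {p ∈ diagonals m | ofPair m p ∈ S}.image (ofPair m) = S := by
        ext e
        simp only [mem_image, mem_filter]
        refine ⟨fun ⟨p, ⟨_, hp⟩, hpe⟩ => hpe ▸ hp, fun he => ?_⟩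
        obtain ⟨p, hp, rfl⟩ := exists_ofPair_eq (hdiag e he)
        exact ⟨p, ⟨hp, he⟩, rfl⟩
      refine ⟨_, ⟨mem_noncrossingSets.mpr ⟨filter_subset _ _, fun p hp q hq hcross => ?_⟩, ?_⟩,
        himage⟩
      · obtain ⟨hp, hpS⟩ := mem_filter.mp hp
        obtain ⟨hq, hqS⟩ := mem_filter.mp hq
        refine hnc _ hpS _ hqS (fun h => ?_) ((crossing_ofPair_iff hp hq).mpr hcross)
        exact not_cross_self q (injOn_ofPair hp hq h ▸ hcross)
      · rwa [← card_image_of_injOn (injOn_ofPair.mono (filter_subset _ _)), himage]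
    · rintro ⟨S', ⟨hS', hcard⟩, rfl⟩
      obtain ⟨hsub, hnc⟩ := mem_noncrossingSets.mp hS'
      refine ⟨by rwa [card_image_of_injOn (injOn_ofPair.mono hsub)], ?_, ?_⟩
      · simp only [forall_mem_image]
        exact fun p hp => isDiagonal_ofPair (hsub hp)
      · simp only [forall_mem_image]
        exact fun p hp q hq _ => (crossing_ofPair_iff (hsub hp) (hsub hq)).not.mpr (hnc p hp q hq)
  rw [noncrossingDiagonalSets, ← Set.coe_ofPred, hset, Nat.card_coe_set_eq, Set.ncard_coe_finset,
    card_image_of_injOn hinj]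

end Polygon

end NoncrossingDiagonals

/-- `Σ_{r=1}^{m−3} (−1)^{r−1} N_m(r) = 1 + (−1)^m`. -/
theorem alternating_sum_noncrossing_diagonal_sets (m : ℕ) (hm : 3 ≤ m) :
    ∑ r ∈ Finset.Icc 1 (m - 3), (-1 : ℤ) ^ (r - 1) * noncrossingDiagonalSets m r
      = 1 + (-1) ^ m := by
  open NoncrossingDiagonals Finset in
  have : NeZero m := ⟨by omega⟩
  have hsum := signedCount_eq_one_add_sum m
  rw [signedCount_eq hm] at hsum
  have hterm : ∀ r ∈ Icc 1 (m - 3), (-1 : ℤ) ^ (r - 1) * noncrossingDiagonalSets m r =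
      -((-1) ^ r * #{S ∈ noncrossingSets m | #S = r}) := fun r hr => by
    have hr : r ≠ 0 := Nat.one_le_iff_ne_zero.mp (mem_Icc.mp hr).1
    rw [noncrossingDiagonalSets_eq_card, ← mul_pow_sub_one hr (-1 : ℤ)]
    ring
  have hm' := mul_pow_sub_one (n := m) (by omega) (-1 : ℤ)
  rw [sum_congr rfl hterm, sum_neg_distrib]
  linarith
end
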